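/- The functional G : L²(Ω, μ) → ℝ is Fréchet differentiable at every u ∈ L²(Ω, μ), with derivative the bounded linear map h ↦ ∫_{Ω₁} φ(u(x))·h(x) dμ(x). -/

import Mathlib

/-!
`F` is differentiable with `F' = φ` (at `c₀` both one-sided derivatives vanish), and `φ` is
`(c₁ - c₀)⁻¹`-Lipschitz. By the mean value theorem, `|F (a + t) - F a - φ a * t| ≤ t² / (c₁ - c₀)`;
integrating this bound shows that the remainder of `G` at `u` in direction `h` is at most
`‖h‖² / (c₁ - c₀)`, which is `o(‖h‖)`. The argument works for any integrand with Lipschitz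
derivative over a finite measure, and `G` is such an integral functional on `L²(Ω₁)` composed with
the restriction `L²(Ω) → L²(Ω₁)`.
-/

open MeasureTheory

noncomputable def phi (c₀ c₁ : ℝ) (z : ℝ) : ℝ :=
  if z ≤ c₀ then (c₀ - z) / (c₁ - z) else 0

noncomputable def F (c₀ c₁ : ℝ) (s : ℝ) : ℝ :=
  if s ≤ c₀ then s + (c₁ - c₀) * Real.log ((c₁ - s) / c₁)
  else c₀ + (c₁ - c₀) * Real.log ((c₁ - c₀) / c₁)

noncomputable def G (c₀ c₁ : ℝ) {Ω : Type*} [MeasurableSpace Ω] (μ : Measure Ω)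
    (Ω₁ : Set Ω) (u : Lp ℝ 2 μ) : ℝ :=
  ∫ x in Ω₁, F c₀ c₁ (u x) ∂μ

open scoped NNReal

section LipschitzDeriv

variable {f f' : ℝ → ℝ} {K : ℝ≥0}

lemma abs_sub_sub_mul_le_of_lipschitzWith_deriv (hf : ∀ x, HasDerivAt f (f' x) x)
    (hf' : LipschitzWith K f') (a t : ℝ) : |f (a + t) - f a - f' a * t| ≤ K * t ^ 2 := by
  have hderiv : ∀ s, HasDerivAt (fun s => f s - f' a * s) (f' s - f' a) s := fun s =>
    ((hf s).sub ((hasDerivAt_id' s).const_mul (f' a))).congr_deriv (by ring)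
  have hbound : ∀ s ∈ Set.uIcc a (a + t), ‖f' s - f' a‖ ≤ K * |t| := fun s hs => by
    calc ‖f' s - f' a‖ ≤ K * |s - a| := hf'.norm_sub_le s a
      _ ≤ K * |t| := by
        gcongr K * ?_
        simpa using Set.abs_sub_left_of_mem_uIcc hs
  have hmvt := (convex_uIcc a (a + t)).norm_image_sub_le_of_norm_hasDerivWithin_le
    (fun s _ => (hderiv s).hasDerivWithinAt) hbound Set.left_mem_uIcc Set.right_mem_uIcc
  calc |f (a + t) - f a - f' a * t| = ‖(f (a + t) - f' a * (a + t)) - (f a - f' a * a)‖ := by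
        rw [Real.norm_eq_abs]; ring_nf
    _ ≤ K * |t| * ‖a + t - a‖ := hmvt
    _ = K * t ^ 2 := by rw [add_sub_cancel_left, Real.norm_eq_abs, mul_assoc, abs_mul_abs_self, sq]

variable {Ω : Type*} [MeasurableSpace Ω] {ν : Measure Ω}

lemma integrable_sub_sub_mul_of_lipschitzWith_deriv (hf : ∀ x, HasDerivAt f (f' x) x)
    (hf' : LipschitzWith K f') {a t : Ω → ℝ} (ha : AEStronglyMeasurable a ν) (ht : MemLp t 2 ν) :
    Integrable (fun x => f (a x + t x) - f (a x) - f' (a x) * t x) ν := by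
  have hfc : Continuous f := continuous_iff_continuousAt.2 fun x => (hf x).continuousAt
  refine Integrable.mono' (ht.integrable_sq.const_mul K) ?_
    (.of_forall fun x => abs_sub_sub_mul_le_of_lipschitzWith_deriv hf hf' (a x) (t x))
  exact ((hfc.comp_aestronglyMeasurable (ha.add ht.1)).sub (hfc.comp_aestronglyMeasurable ha)).sub
    ((hf'.continuous.comp_aestronglyMeasurable ha).mul ht.1)

lemma L2.integral_sq_eq_norm_sq (h : Lp ℝ 2 ν) : ∫ x, h x ^ 2 ∂ν = ‖h‖ ^ 2 := by
  rw [← real_inner_self_eq_norm_sq, L2.inner_def]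
  simp [sq]

lemma innerSL_toLp_apply {w : Ω → ℝ} (hw : MemLp w 2 ν) (h : Lp ℝ 2 ν) :
    innerSL ℝ (hw.toLp w) h = ∫ x, w x * h x ∂ν := by
  rw [innerSL_apply_apply, L2.inner_def]
  refine integral_congr_ae ?_
  filter_upwards [hw.coeFn_toLp] with x hx
  simp [hx, mul_comm]

variable [IsFiniteMeasure ν]

lemma LipschitzWith.comp_memLp_of_isFiniteMeasure {E F : Type*} [NormedAddCommGroup E]
    [NormedAddCommGroup F] {g : E → F} (hg : LipschitzWith K g) {p : ENNReal} {v : Ω → E}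
    (hv : MemLp v p ν) : MemLp (fun x => g (v x)) p ν := by
  have := ((hg.sub (LipschitzWith.const (g 0))).comp_memLp (by simp) hv).add (memLp_const (g 0))
  convert this using 1
  ext x
  simp

lemma integrable_comp_of_lipschitzWith_deriv (hf : ∀ x, HasDerivAt f (f' x) x)
    (hf' : LipschitzWith K f') {v : Ω → ℝ} (hv : MemLp v 2 ν) :
    Integrable (fun x => f (v x)) ν := by
  -- `f ∘ v` is the remainder at `a = 0` plus the affine function `f 0 + f' 0 * v`
  have := ((integrable_sub_sub_mul_of_lipschitzWith_deriv hf hf'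
    (aestronglyMeasurable_const (b := 0)) hv).add (integrable_const (f 0))).add
    ((hv.integrable one_le_two).const_mul (f' 0))
  refine this.congr (.of_forall fun x => ?_)
  simp only [Pi.add_apply, zero_add]
  ring

lemma norm_integral_comp_add_sub_sub_le (hf : ∀ x, HasDerivAt f (f' x) x)
    (hf' : LipschitzWith K f') (v h : Lp ℝ 2 ν) :
    ‖∫ x, f ((v + h) x) ∂ν - ∫ x, f (v x) ∂ν - ∫ x, f' (v x) * h x ∂ν‖ ≤ K * ‖h‖ ^ 2 := by
  have hv := Lp.memLp v
  have hh := Lp.memLp h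
  have hvh : ∫ x, f ((v + h) x) ∂ν = ∫ x, f (v x + h x) ∂ν :=
    integral_congr_ae <| by filter_upwards [Lp.coeFn_add v h] with x hx; rw [hx, Pi.add_apply]
  have hfvh : Integrable (fun x => f (v x + h x)) ν :=
    integrable_comp_of_lipschitzWith_deriv hf hf' (hv.add hh)
  have hfv := integrable_comp_of_lipschitzWith_deriv hf hf' hv
  have hdiff : Integrable (fun x => f (v x + h x) - f (v x)) ν := hfvh.sub hfv
  have hf'vh : Integrable (fun x => f' (v x) * h x) ν :=
    (hf'.comp_memLp_of_isFiniteMeasure hv).integrable_mul hh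
  rw [hvh, ← integral_sub hfvh hfv, ← integral_sub hdiff hf'vh, ← L2.integral_sq_eq_norm_sq,
    ← integral_const_mul]
  exact norm_integral_le_of_norm_le (hh.integrable_sq.const_mul K)
    (.of_forall fun x => abs_sub_sub_mul_le_of_lipschitzWith_deriv hf hf' (v x) (h x))

theorem hasFDerivAt_integral_comp (hf : ∀ x, HasDerivAt f (f' x) x) (hf' : LipschitzWith K f')
    (v : Lp ℝ 2 ν) :
    HasFDerivAt (fun w : Lp ℝ 2 ν => ∫ x, f (w x) ∂ν)
      (innerSL ℝ ((hf'.comp_memLp_of_isFiniteMeasure (Lp.memLp v)).toLp _)) v := by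
  rw [hasFDerivAt_iff_isLittleO_nhds_zero]
  refine (Asymptotics.IsBigO.of_bound K (.of_forall fun h => ?_)).trans_isLittleO
    (Asymptotics.isLittleO_norm_pow_id one_lt_two)
  rw [innerSL_toLp_apply, norm_pow, norm_norm]
  exact norm_integral_comp_add_sub_sub_le hf hf' v h

end LipschitzDeriv

section Integrand

variable {c₀ c₁ : ℝ}

lemma phi_eq_min (z : ℝ) : phi c₀ c₁ z = (c₀ - min z c₀) / (c₁ - min z c₀) := by
  rcases le_or_gt z c₀ with h | h
  · rw [phi, if_pos h, min_eq_left h]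
  · rw [phi, if_neg h.not_ge, min_eq_right h.le, sub_self, zero_div]

lemma lipschitzWith_phi (hc : c₀ < c₁) : LipschitzWith (c₁ - c₀)⁻¹.toNNReal (phi c₀ c₁) := by
  refine LipschitzWith.of_dist_le' fun a b => ?_
  have hK : 0 < c₁ - c₀ := sub_pos.2 hc
  set a' := min a c₀
  set b' := min b c₀
  have ha : c₁ - c₀ ≤ c₁ - a' := by linarith [min_le_right a c₀]
  have hb : c₁ - c₀ ≤ c₁ - b' := by linarith [min_le_right b c₀]
  have ha₁ : 0 < c₁ - a' := hK.trans_le ha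
  have hb₁ : 0 < c₁ - b' := hK.trans_le hb
  have hmin : |a' - b'| ≤ |a - b| := by simpa using abs_min_sub_min_le_max a c₀ b c₀
  have hdiff : (c₀ - a') / (c₁ - a') - (c₀ - b') / (c₁ - b')
      = (c₁ - c₀) * (b' - a') / ((c₁ - a') * (c₁ - b')) := by
    field_simp [ha₁.ne', hb₁.ne']
    ring
  rw [Real.dist_eq, Real.dist_eq, phi_eq_min, phi_eq_min, hdiff, abs_div, abs_mul,
    abs_of_pos hK, abs_of_pos (mul_pos ha₁ hb₁), abs_sub_comm b']
  calc (c₁ - c₀) * |a' - b'| / ((c₁ - a') * (c₁ - b'))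
      ≤ (c₁ - c₀) * |a' - b'| / ((c₁ - c₀) * (c₁ - c₀)) := by gcongr
    _ = (c₁ - c₀)⁻¹ * |a' - b'| := by field_simp
    _ ≤ (c₁ - c₀)⁻¹ * |a - b| := by gcongr

lemma hasDerivAt_F (hc₁ : 0 < c₁) (hc : c₀ < c₁) (x : ℝ) :
    HasDerivAt (F c₀ c₁) (phi c₀ c₁ x) x := by
  have left : ∀ y ≤ c₀, HasDerivWithinAt (F c₀ c₁) (phi c₀ c₁ y) (Set.Iic c₀) y := by
    intro y hy
    have hy₁ : 0 < c₁ - y := by linarith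
    have hlog := ((((hasDerivAt_id y).const_sub c₁).div_const c₁).log
      (div_pos hy₁ hc₁).ne').const_mul (c₁ - c₀)
    refine ((hasDerivAt_id y).add hlog).hasDerivWithinAt.congr (fun s hs => if_pos hs)
      (if_pos hy) |>.congr_deriv ?_
    rw [phi, if_pos hy, id]
    field_simp
    ring
  have right : ∀ y ≥ c₀, HasDerivWithinAt (F c₀ c₁) (phi c₀ c₁ y) (Set.Ici c₀) y := by
    intro y hy
    have hconst : ∀ s ≥ c₀, F c₀ c₁ s = F c₀ c₁ c₀ := fun s hs => by
      rcases hs.eq_or_lt with rfl | hs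
      · rfl
      · rw [F, if_neg hs.not_ge, F, if_pos le_rfl]
    refine (hasDerivWithinAt_const y _ (F c₀ c₁ c₀)).congr (fun s hs => hconst s hs) (hconst y hy)
      |>.congr_deriv ?_
    rcases hy.eq_or_lt with rfl | hy
    · simp [phi]
    · simp [phi, hy.not_ge]
  rcases lt_trichotomy x c₀ with h | rfl | h
  · exact (left x h.le).hasDerivAt (Iic_mem_nhds h)
  · simpa [Set.Iic_union_Ici] using (left x le_rfl).union (right x le_rfl)
  · exact (right x h.le).hasDerivAt (Ici_mem_nhds h)

end Integrand

theorem G_frechet_differentiable_general (c₀ c₁ : ℝ) (hc₀ : 0 < c₀) (hc : c₀ < c₁)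
    {Ω : Type*} [MeasurableSpace Ω] (μ : Measure Ω) [IsFiniteMeasure μ]
    (Ω₁ : Set Ω) (u : Lp ℝ 2 μ) :
    ∃ L : Lp ℝ 2 μ →L[ℝ] ℝ,
      (∀ h : Lp ℝ 2 μ, L h = ∫ x in Ω₁, phi c₀ c₁ (u x) * h x ∂μ) ∧
      HasFDerivAt (G c₀ c₁ μ Ω₁) L u := by
  set R := LpToLpRestrictCLM Ω ℝ ℝ μ 2 Ω₁
  have hR : ∀ w : Lp ℝ 2 μ, R w =ᵐ[μ.restrict Ω₁] w := LpToLpRestrictCLM_coeFn ℝ Ω₁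
  have hG : G c₀ c₁ μ Ω₁ = (fun w => ∫ x, F c₀ c₁ (w x) ∂μ.restrict Ω₁) ∘ R :=
    funext fun w => integral_congr_ae <| by filter_upwards [hR w] with x hx; rw [hx]
  have hderiv := hasFDerivAt_integral_comp (hasDerivAt_F (hc₀.trans hc) hc)
    (lipschitzWith_phi hc) (R u)
  refine ⟨_ ∘L R, fun h => ?_, hG ▸ hderiv.comp u R.hasFDerivAt⟩
  rw [ContinuousLinearMap.comp_apply, innerSL_toLp_apply]
  exact integral_congr_ae <| by filter_upwards [hR u, hR h] with x hu hh; rw [hu, hh]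

theorem G_frechet_differentiable (c₀ c₁ : ℝ) (hc₀ : 0 < c₀) (hc : c₀ < c₁)
    {Ω : Type*} [MeasurableSpace Ω] (μ : Measure Ω) [IsFiniteMeasure μ]
    (Ω₁ : Set Ω) (hΩ₁ : MeasurableSet Ω₁) (u : Lp ℝ 2 μ) :
    ∃ L : Lp ℝ 2 μ →L[ℝ] ℝ,
      (∀ h : Lp ℝ 2 μ, L h = ∫ x in Ω₁, phi c₀ c₁ (u x) * h x ∂μ) ∧
      HasFDerivAt (G c₀ c₁ μ Ω₁) L u :=
  G_frechet_differentiable_general c₀ c₁ hc₀ hc μ Ω₁ u
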